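/- Let G be a finite set with |G| ≥ 3 and let R_1,…,R_k be pairwise disjoint irreflexive symmetric binary relations on G whose union is the set of all ordered pairs (x,y) with x ≠ y. Then there exists an event-labeled tree (T,t) representing R_1,…,R_k if and only if (i) for each i ∈ {1,…,k} the graph G_{R_i} is a cograph, and (ii) for any three pairwise distinct x, y, z ∈ G the three pairs (x,y), (x,z), (y,z) lie in at most two distinct relations among R_1,…,R_k. -/

import Mathlib

/-!
Necessity: of the three pairwise least common ancestors of three leaves, two coincide and lie
above the third. Hence a triangle carries at most two labels, and an induced path `a b c d` in
`G_{R_i}` would force `lca(b,d) = lca(b,c)`, although only the second is labelled `i`.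

Sufficiency: every set of at least two elements splits into two nonempty parts such that all
pairs across the split lie in a single `R_i`. Such splits are extended one new element `z` at a
time: by (ii) the pairs through `z` outside `R_i` all share one relation, and where this is not
enough, an induced `P₄` through `z` would appear in `G_{R_i}`. Splitting recursively yields a
binary tree whose nodes are the words of turns from the root; labelling each node by the relation
of its split represents `R_1, …, R_k`.
-/

/-- `u` lies on the (unique) path from `v` to the root of the tree `T`. -/
def Anc {V : Type} (T : SimpleGraph V) (root u v : V) : Prop :=
  ∀ p : T.Walk v root, p.IsPath → u ∈ p.support

/-- `w` is the least common ancestor of `x` and `y` in the tree `T` rooted at `root`: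
it is a common ancestor and every common ancestor of `x` and `y` is an ancestor of `w`. -/
def IsLCA {V : Type} (T : SimpleGraph V) (root w x y : V) : Prop :=
  Anc T root w x ∧ Anc T root w y ∧
    ∀ u, Anc T root u x → Anc T root u y → Anc T root u w

/-- `v` is a leaf of the tree `T` rooted at `root`:
a non-root vertex of degree one. -/
def IsLeaf {V : Type} (T : SimpleGraph V) (root v : V) : Prop :=
  v ≠ root ∧ ∃! u, T.Adj v u

/-- The simple graph `G_R` of a (symmetric irreflexive) relation `R`. -/
def relGraph {G : Type} (R : G → G → Prop) : SimpleGraph G where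
  Adj x y := x ≠ y ∧ (R x y ∨ R y x)
  symm := ⟨fun _ _ h => ⟨Ne.symm h.1, h.2.symm⟩⟩
  loopless := ⟨fun _ h => h.1 rfl⟩

/-- A cograph: a simple graph with no induced path on four vertices. -/
def IsCograph {V : Type} (H : SimpleGraph V) : Prop :=
  ¬ ∃ a b c d : V, a ≠ b ∧ a ≠ c ∧ a ≠ d ∧ b ≠ c ∧ b ≠ d ∧ c ≠ d ∧
    H.Adj a b ∧ H.Adj b c ∧ H.Adj c d ∧ ¬ H.Adj a c ∧ ¬ H.Adj a d ∧ ¬ H.Adj b d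

/-- The tree `T` rooted at `root` contains the rooted triple `xy|z`:
`x`, `y`, `z` are pairwise distinct leaves and the path from `x` to `y`
does not intersect the path from `z` to the root. -/
def ContainsTriple {V : Type} (T : SimpleGraph V) (root x y z : V) : Prop :=
  x ≠ y ∧ x ≠ z ∧ y ≠ z ∧
  IsLeaf T root x ∧ IsLeaf T root y ∧ IsLeaf T root z ∧
  ∀ (p : T.Walk x y) (q : T.Walk z root), p.IsPath → q.IsPath →
    ∀ v, v ∈ p.support → v ∉ q.support

/-- The event-labeled tree `(T,t)` (with leaves `ι x`, `x : G`) represents the pairwise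
disjoint relations `R 0, …, R (k-1)`: for all distinct `x y : G` and all `i`,
the label of `lca (ι x) (ι y)` equals `i` iff `(x,y) ∈ R i`. -/
def RepresentsRel {G V : Type} (k : ℕ) (R : Fin k → G → G → Prop)
    (T : SimpleGraph V) (root : V) (ι : G → V) (t : V → Fin k) : Prop :=
  ∀ x y : G, x ≠ y → ∀ w : V, IsLCA T root w (ι x) (ι y) →
    ∀ i : Fin k, (t w = i ↔ R i x y)

/-- There exists an event-labeled tree representing the relations `R 0, …, R (k-1)`:
a rooted tree whose leaf set is exactly `G` (via the injection `ι`) together with an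
event labeling `t` such that `t (lca x y) = i ↔ (x,y) ∈ R i` for all distinct `x, y`. -/
def HasEventTree (G : Type) (k : ℕ) (R : Fin k → G → G → Prop) : Prop :=
  ∃ (V : Type) (T : SimpleGraph V) (root : V) (ι : G → V) (t : V → Fin k),
    T.IsTree ∧ Function.Injective ι ∧
    (∀ v : V, IsLeaf T root v ↔ ∃ g : G, ι g = v) ∧
    RepresentsRel k R T root ι t

/-- Condition (ii): for any three pairwise distinct elements, the three pairs among
them lie in at most two distinct relations. -/
def AtMostTwoColors {G : Type} (k : ℕ) (R : Fin k → G → G → Prop) : Prop :=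
  ∀ x y z : G, x ≠ y → x ≠ z → y ≠ z →
    ∀ i j l : Fin k, R i x y → R j x z → R l y z → (i = j ∨ i = l ∨ j = l)

/-- The triple set `𝒯_{R_1,…,R_k}`: `xy|z` belongs to it iff `x,y,z` are pairwise
distinct, `(x,z)` and `(y,z)` lie in the same relation `R i` and `(x,y)` lies in a
different relation `R j`. -/
def TripleSet {G : Type} (k : ℕ) (R : Fin k → G → G → Prop) (x y z : G) : Prop :=
  x ≠ y ∧ x ≠ z ∧ y ≠ z ∧ ∃ i j : Fin k, i ≠ j ∧ R i x z ∧ R i y z ∧ R j x y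

/-- A set of rooted triples (over `G`) is consistent if there is a rooted tree
containing all of them (elements of `G` realized as distinct vertices). -/
def Consistent {G : Type} (Tr : G → G → G → Prop) : Prop :=
  ∃ (V : Type) (T : SimpleGraph V) (root : V) (ι : G → V),
    T.IsTree ∧ Function.Injective ι ∧
    ∀ x y z : G, Tr x y z → ContainsTriple T root (ι x) (ι y) (ι z)

open SimpleGraph Walk Finset

lemma List.exists_mem_forall_rel {α : Type} {r : α → α → Prop} (hrefl : ∀ a, r a a)
    (htrans : ∀ a b c, r a b → r b c → r a c) :
    ∀ l : List α, l ≠ [] → (∀ a ∈ l, ∀ b ∈ l, r a b ∨ r b a) → ∃ m ∈ l, ∀ a ∈ l, r a m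
  | [], hne, _ => absurd rfl hne
  | [a], _, _ => ⟨a, by simp [hrefl]⟩
  | a :: b :: l, _, htot => by
    obtain ⟨m, hm, hmax⟩ := exists_mem_forall_rel hrefl htrans (b :: l) (List.cons_ne_nil _ _)
      fun x hx y hy => htot x (List.mem_cons_of_mem a hx) y (List.mem_cons_of_mem a hy)
    rcases htot a List.mem_cons_self m (List.mem_cons_of_mem a hm) with ham | hma
    · exact ⟨m, List.mem_cons_of_mem a hm, by simpa [ham] using hmax⟩
    · exact ⟨a, List.mem_cons_self, by simpa [hrefl] using fun x hx => htrans x m a (hmax x hx) hma⟩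

lemma List.exists_cons_suffix {α : Type} {u v : List α} (h : u <:+ v) (hne : u ≠ v) :
    ∃ b, b :: u <:+ v := by
  obtain ⟨l, rfl⟩ := h
  rcases l.eq_nil_or_concat with rfl | ⟨L, b, rfl⟩
  · exact absurd rfl hne
  · exact ⟨b, L, by simp⟩

section RootedTree

variable {V : Type} {T : SimpleGraph V} {root : V}

lemma anc_iff_mem_support (hT : T.IsTree) {u v : V} {p : T.Walk v root} (hp : p.IsPath) :
    Anc T root u v ↔ u ∈ p.support :=
  ⟨fun h => h p hp, fun h _ hq => (hT.existsUnique_path v root).unique hq hp ▸ h⟩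

lemma anc_refl (v : V) : Anc T root v v :=
  fun p _ => p.start_mem_support

lemma anc_root (v : V) : Anc T root root v :=
  fun p _ => p.end_mem_support

lemma anc_trans (hT : T.IsTree) {u v w : V} (huv : Anc T root u v) (hvw : Anc T root v w) :
    Anc T root u w := by
  classical
  obtain ⟨p, hp⟩ := (hT.existsUnique_path w root).exists
  have hv := (anc_iff_mem_support hT hp).mp hvw
  have hu := (anc_iff_mem_support hT (hp.dropUntil hv)).mp huv
  exact (anc_iff_mem_support hT hp).mpr (support_dropUntil_subset_support p hv hu)

lemma anc_antisymm (hT : T.IsTree) {u v : V} (huv : Anc T root u v) (hvu : Anc T root v u) :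
    u = v := by
  classical
  obtain ⟨p, hp⟩ := (hT.existsUnique_path v root).exists
  have hu := (anc_iff_mem_support hT hp).mp huv
  have hv := (anc_iff_mem_support hT (hp.dropUntil hu)).mp hvu
  -- `v` starts `p.takeUntil u` and lies on `p.dropUntil u`; the two share only `u`
  have hnd := hp.support_nodup
  rw [← take_spec p hu, support_append] at hnd
  rw [← cons_tail_support, List.mem_cons] at hv
  rcases hv with h | h
  · exact h.symm
  · exact (List.disjoint_of_nodup_append hnd (p.takeUntil u hu).start_mem_support h).elim

lemma anc_total (hT : T.IsTree) {u u' v : V} (hu : Anc T root u v) (hu' : Anc T root u' v) :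
    Anc T root u u' ∨ Anc T root u' u := by
  classical
  obtain ⟨p, hp⟩ := (hT.existsUnique_path v root).exists
  have hmem := (anc_iff_mem_support hT hp).mp hu
  by_cases hdrop : u' ∈ (p.dropUntil u hmem).support
  · exact Or.inr ((anc_iff_mem_support hT (hp.dropUntil hmem)).mpr hdrop)
  · left
    have htake : u' ∈ (p.takeUntil u hmem).support := by
      have h := (anc_iff_mem_support hT hp).mp hu'
      rw [← take_spec p hmem, mem_support_append_iff] at h
      exact h.resolve_right hdrop
    -- the part of `p` from `u'` to the root passes through `u`
    have hpath :
        (((p.takeUntil u hmem).dropUntil u' htake).append (p.dropUntil u hmem)).IsPath := by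
      have h : (((p.takeUntil u hmem).takeUntil u' htake).append
          (((p.takeUntil u hmem).dropUntil u' htake).append (p.dropUntil u hmem))).IsPath := by
        rw [append_assoc, take_spec, take_spec]
        exact hp
      exact h.of_append_right
    exact (anc_iff_mem_support hT hpath).mpr
      ((mem_support_append_iff _ _).mpr (Or.inl (end_mem_support _)))

lemma exists_isLCA (hT : T.IsTree) (x y : V) : ∃ w, IsLCA T root w x y := by
  classical
  obtain ⟨p, hp⟩ := (hT.existsUnique_path x root).exists
  have hmem : ∀ u, u ∈ p.support.filter (fun u => Anc T root u x ∧ Anc T root u y) ↔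
      Anc T root u x ∧ Anc T root u y := fun u => by
    simpa [and_iff_right_iff_imp] using fun h _ => (anc_iff_mem_support hT hp).mp h
  obtain ⟨w, hw, hmin⟩ := List.exists_mem_forall_rel anc_refl (fun _ _ _ => anc_trans hT) _
    (List.ne_nil_of_mem ((hmem root).mpr ⟨anc_root x, anc_root y⟩))
    fun u hu u' hu' => anc_total hT ((hmem u).mp hu).1 ((hmem u').mp hu').1
  exact ⟨w, ((hmem w).mp hw).1, ((hmem w).mp hw).2, fun u hx hy => hmin u ((hmem u).mpr ⟨hx, hy⟩)⟩

lemma IsLCA.symm {w x y : V} (h : IsLCA T root w x y) : IsLCA T root w y x :=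
  ⟨h.2.1, h.1, fun u hy hx => h.2.2 u hx hy⟩

lemma anc_of_isLCA_of_ne (hT : T.IsTree) {x y z w₁ w₂ w₃ : V} (h₁ : IsLCA T root w₁ x y)
    (h₂ : IsLCA T root w₂ x z) (h₃ : IsLCA T root w₃ y z) (h₁₂ : w₁ ≠ w₂) (h₁₃ : w₁ ≠ w₃) :
    Anc T root w₂ w₁ := by
  refine (anc_total hT h₁.1 h₂.1).resolve_left fun h₁₂' => ?_
  have h₁₃' : Anc T root w₁ w₃ := h₃.2.2 w₁ h₁.2.1 (anc_trans hT h₁₂' h₂.2.1)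
  rcases anc_total hT h₂.2.1 h₃.2.1 with h₂₃ | h₃₂
  · exact h₁₂ (anc_antisymm hT h₁₂' (h₁.2.2 w₂ h₂.1 (anc_trans hT h₂₃ h₃.1)))
  · exact h₁₃ (anc_antisymm hT h₁₃' (h₁.2.2 w₃ (anc_trans hT h₃₂ h₂.1) h₃.1))

lemma isLCA_eq_of_ne (hT : T.IsTree) {x y z w₁ w₂ w₃ : V} (h₁ : IsLCA T root w₁ x y)
    (h₂ : IsLCA T root w₂ x z) (h₃ : IsLCA T root w₃ y z) (h₁₂ : w₁ ≠ w₂) (h₁₃ : w₁ ≠ w₃) :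
    w₂ = w₃ ∧ Anc T root w₂ w₁ := by
  have h₂₁ := anc_of_isLCA_of_ne hT h₁ h₂ h₃ h₁₂ h₁₃
  have h₃₁ := anc_of_isLCA_of_ne hT h₁.symm h₃ h₂ h₁₃ h₁₂
  exact ⟨anc_antisymm hT (h₃.2.2 w₂ (anc_trans hT h₂₁ h₁.2.1) h₂.2.1)
    (h₂.2.2 w₃ (anc_trans hT h₃₁ h₁.1) h₃.2.1), h₂₁⟩

end RootedTree

section Representation

variable {G V : Type} {k : ℕ} {R : Fin k → G → G → Prop} {T : SimpleGraph V} {root : V}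
  {ι : G → V} {t : V → Fin k}

lemma atMostTwoColors_of_representsRel (hT : T.IsTree) (hrep : RepresentsRel k R T root ι t) :
    AtMostTwoColors k R := by
  intro x y z hxy hxz hyz i j l hi hj hl
  obtain ⟨w₁, h₁⟩ := exists_isLCA (root := root) hT (ι x) (ι y)
  obtain ⟨w₂, h₂⟩ := exists_isLCA (root := root) hT (ι x) (ι z)
  obtain ⟨w₃, h₃⟩ := exists_isLCA (root := root) hT (ι y) (ι z)
  rw [← (hrep x y hxy w₁ h₁ i).mpr hi, ← (hrep x z hxz w₂ h₂ j).mpr hj,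
    ← (hrep y z hyz w₃ h₃ l).mpr hl]
  by_cases h₁₂ : w₁ = w₂
  · exact Or.inl (congrArg t h₁₂)
  by_cases h₁₃ : w₁ = w₃
  · exact Or.inr (Or.inl (congrArg t h₁₃))
  · exact Or.inr (Or.inr (congrArg t (isLCA_eq_of_ne hT h₁ h₂ h₃ h₁₂ h₁₃).1))

lemma isCograph_of_representsRel (hT : T.IsTree) (hsym : ∀ i x y, R i x y → R i y x)
    (hrep : RepresentsRel k R T root ι t) (i : Fin k) : IsCograph (relGraph (R i)) := by
  have label : ∀ {x y}, x ≠ y → ∀ {w}, IsLCA T root w (ι x) (ι y) →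
      (t w = i ↔ (relGraph (R i)).Adj x y) := fun hxy w hw =>
    (hrep _ _ hxy w hw i).trans ⟨fun h => ⟨hxy, Or.inl h⟩, fun h => h.2.elim id (hsym _ _ _)⟩
  rintro ⟨a, b, c, d, hab, hac, had, hbc, hbd, hcd, hab', hbc', hcd', hac', had', hbd'⟩
  obtain ⟨wab, hwab⟩ := exists_isLCA (root := root) hT (ι a) (ι b)
  obtain ⟨wac, hwac⟩ := exists_isLCA (root := root) hT (ι a) (ι c)
  obtain ⟨wad, hwad⟩ := exists_isLCA (root := root) hT (ι a) (ι d)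
  obtain ⟨wbc, hwbc⟩ := exists_isLCA (root := root) hT (ι b) (ι c)
  obtain ⟨wbd, hwbd⟩ := exists_isLCA (root := root) hT (ι b) (ι d)
  obtain ⟨wcd, hwcd⟩ := exists_isLCA (root := root) hT (ι c) (ι d)
  have tab := (label hab hwab).mpr hab'
  have tbc := (label hbc hwbc).mpr hbc'
  have tcd := (label hcd hwcd).mpr hcd'
  have tac := mt (label hac hwac).mp hac'
  have tad := mt (label had hwad).mp had'
  have tbd := mt (label hbd hwbd).mp hbd'
  -- in each of the triples `acb`, `bdc`, `abd` the odd pair is the one whose lca is unique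
  have eabc := isLCA_eq_of_ne hT hwac hwab hwbc.symm (fun e => tac (e ▸ tab))
    (fun e => tac (e ▸ tbc))
  have ebcd := isLCA_eq_of_ne hT hwbd hwbc hwcd.symm (fun e => tbd (e ▸ tbc))
    (fun e => tbd (e ▸ tcd))
  have eabd := isLCA_eq_of_ne hT hwab hwad hwbd (fun e => tad (e ▸ tab))
    (fun e => tbd (e ▸ tab))
  have : wbd = wbc := anc_antisymm hT (eabd.1 ▸ eabc.1 ▸ eabd.2) ebcd.2
  exact tbd (this ▸ tbc)

end Representation

lemma relGraph_adj_iff {G : Type} {r : G → G → Prop} (hr : ∀ x y, r x y → r y x) {x y : G} :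
    (relGraph r).Adj x y ↔ x ≠ y ∧ r x y :=
  and_congr_right fun _ => or_iff_left_of_imp (hr y x)

lemma IsCograph.adj_of_adj {V : Type} {H : SimpleGraph V} (hH : IsCograph H) {x y z u : V}
    (hzu : z ≠ u) (hzx : z ≠ x) (hzy : H.Adj z y) (hyu : H.Adj y u) (hux : H.Adj u x)
    (hzu' : ¬H.Adj z u) (hzx' : ¬H.Adj z x) : H.Adj y x := by
  by_contra hyx
  exact hH ⟨z, y, u, x, hzy.ne, hzu, hzx, hyu.ne, fun e => hzx' (e ▸ hzy), hux.ne, hzy, hyu, hux,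
    hzu', hzx', hyx⟩

section Split

variable {G κ : Type} [DecidableEq G]

structure IsSplit (R : κ → G → G → Prop) (s a : Finset G) (i : κ) : Prop where
  subset : a ⊆ s
  nonempty : a.Nonempty
  sdiff_nonempty : (s \ a).Nonempty
  rel : ∀ x ∈ a, ∀ y ∈ s \ a, R i x y

variable {R : κ → G → G → Prop} {s a : Finset G} {i : κ} {z : G}

lemma IsSplit.compl (hsym : ∀ i x y, R i x y → R i y x) (h : IsSplit R s a i) :
    IsSplit R s (s \ a) i where
  subset := sdiff_subset
  nonempty := h.sdiff_nonempty
  sdiff_nonempty := by rw [Finset.sdiff_sdiff_eq_self h.subset]; exact h.nonempty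
  rel x hx y hy := hsym _ _ _ (h.rel y (by rwa [Finset.sdiff_sdiff_eq_self h.subset] at hy) x hx)

lemma IsSplit.insert_of_forall_rel (h : IsSplit R s a i) (hz : z ∉ s) (hza : ∀ x ∈ a, R i x z) :
    IsSplit R (insert z s) a i where
  subset := h.subset.trans (subset_insert z s)
  nonempty := h.nonempty
  sdiff_nonempty := ⟨z, mem_sdiff.mpr ⟨mem_insert_self z s, fun hza' => hz (h.subset hza')⟩⟩
  rel x hx y hy := by
    obtain ⟨hy, hya⟩ := mem_sdiff.mp hy
    rcases mem_insert.mp hy with rfl | hy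
    · exact hza x hx
    · exact h.rel x hx y (mem_sdiff.mpr ⟨hy, hya⟩)

lemma isSplit_singleton (hz : z ∉ s) (hs : s.Nonempty) (hzs : ∀ y ∈ s, R i z y) :
    IsSplit R (insert z s) {z} i where
  subset := singleton_subset_iff.mpr (mem_insert_self z s)
  nonempty := singleton_nonempty z
  sdiff_nonempty := by rwa [sdiff_singleton_eq_erase, erase_insert hz]
  rel x hx y hy := by
    rw [mem_singleton.mp hx]
    rw [sdiff_singleton_eq_erase, erase_insert hz] at hy
    exact hzs y hy

end Split

section SplitExistence

variable {G : Type} [DecidableEq G] {k : ℕ} {R : Fin k → G → G → Prop} {s a : Finset G}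
  {i : Fin k} {z : G}

lemma IsSplit.rel_of_not_rel (hsym : ∀ i x y, R i x y → R i y x)
    (hcover : ∀ x y : G, x ≠ y → ∃ i, R i x y) (h2col : AtMostTwoColors k R)
    (h : IsSplit R s a i) (hz : z ∉ s) {u w : G} {j : Fin k} (hu : u ∈ a) (hj : R j z u)
    (hji : j ≠ i) (hw : w ∈ s \ a) (hwz : ¬R i w z) : R j z w := by
  have hzw : z ≠ w := fun e => hz (e ▸ (mem_sdiff.mp hw).1)
  obtain ⟨l, hl⟩ := hcover z w hzw
  rcases h2col z u w (fun e => hz (e ▸ h.subset hu)) hzw (fun e => (mem_sdiff.mp hw).2 (e ▸ hu))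
    j l i hj hl (h.rel u hu w hw) with e | e | e
  · exact e ▸ hl
  · exact absurd e hji
  · exact absurd (hsym _ _ _ (e ▸ hl)) hwz

lemma IsSplit.rel_of_mem_of_mem (hsym : ∀ i x y, R i x y → R i y x)
    (hcog : IsCograph (relGraph (R i))) (h : IsSplit R s a i) (hz : z ∉ s) {x y u : G}
    (hx : x ∈ a) (hy : y ∈ a) (hu : u ∈ s \ a) (hyz : R i y z) (hxz : ¬R i x z)
    (huz : ¬R i u z) : R i x y := by
  have hadj : ∀ {p q}, (relGraph (R i)).Adj p q ↔ p ≠ q ∧ R i p q := relGraph_adj_iff (hsym i)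
  have hzs : ∀ {w}, w ∈ s → z ≠ w := fun hw e => hz (e ▸ hw)
  refine hsym _ _ _ (hadj.mp (hcog.adj_of_adj (hzs (mem_sdiff.mp hu).1) (hzs (h.subset hx))
    (hadj.mpr ⟨hzs (h.subset hy), hsym _ _ _ hyz⟩) ?_ ?_ ?_ ?_)).2
  · exact hadj.mpr ⟨fun e => (mem_sdiff.mp hu).2 (e ▸ hy), h.rel y hy u hu⟩
  · exact hadj.mpr ⟨fun e => (mem_sdiff.mp hu).2 (e ▸ hx), hsym _ _ _ (h.rel x hx u hu)⟩
  · exact fun e => huz (hsym _ _ _ (hadj.mp e).2)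
  · exact fun e => hxz (hsym _ _ _ (hadj.mp e).2)

open Classical in
lemma IsSplit.insert_filter (hsym : ∀ i x y, R i x y → R i y x)
    (hcog : IsCograph (relGraph (R i))) (h : IsSplit R s a i) (hz : z ∉ s)
    (ha : ∃ u ∈ a, ¬R i u z) (hb : ∃ u ∈ s \ a, ¬R i u z) (hw : ∃ w ∈ s, R i w z) :
    IsSplit R (insert z s) (insert z {x ∈ s | ¬R i x z}) i where
  subset := insert_subset_insert z (filter_subset _ s)
  nonempty := insert_nonempty z _
  sdiff_nonempty := by
    obtain ⟨w, hws, hwz⟩ := hw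
    refine ⟨w, mem_sdiff.mpr ⟨mem_insert_of_mem hws, ?_⟩⟩
    simp only [mem_insert, mem_filter, not_or, not_and, not_not]
    exact ⟨fun e => hz (e ▸ hws), fun _ => hwz⟩
  rel x hx y hy := by
    simp only [mem_sdiff, mem_insert, mem_filter, not_or, not_and, not_not] at hx hy
    obtain ⟨hys | hys, hyz, hyz'⟩ := hy
    · exact absurd hys hyz
    have hyz' := hyz' hys
    obtain rfl | ⟨hxs, hxz⟩ := hx
    · exact hsym _ _ _ hyz'
    obtain ⟨u, hu, huz⟩ := ha
    obtain ⟨v, hv, hvz⟩ := hb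
    by_cases hxa : x ∈ a <;> by_cases hya : y ∈ a
    · exact h.rel_of_mem_of_mem hsym hcog hz hxa hya hv hyz' hxz hvz
    · exact h.rel x hxa y (mem_sdiff.mpr ⟨hys, hya⟩)
    · exact hsym _ _ _ (h.rel y hya x (mem_sdiff.mpr ⟨hxs, hxa⟩))
    · exact (h.compl hsym).rel_of_mem_of_mem hsym hcog hz (mem_sdiff.mpr ⟨hxs, hxa⟩)
        (mem_sdiff.mpr ⟨hys, hya⟩) (by rwa [Finset.sdiff_sdiff_eq_self h.subset]) hyz' hxz huz

lemma IsSplit.exists_isSplit_insert (hsym : ∀ i x y, R i x y → R i y x)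
    (hcover : ∀ x y : G, x ≠ y → ∃ i, R i x y) (hcog : ∀ i, IsCograph (relGraph (R i)))
    (h2col : AtMostTwoColors k R) (h : IsSplit R s a i) (hz : z ∉ s) :
    ∃ a' i', IsSplit R (insert z s) a' i' := by
  by_cases ha : ∀ x ∈ a, R i x z
  · exact ⟨a, i, h.insert_of_forall_rel hz ha⟩
  by_cases hb : ∀ x ∈ s \ a, R i x z
  · exact ⟨s \ a, i, (h.compl hsym).insert_of_forall_rel hz hb⟩
  push Not at ha hb
  by_cases hw : ∃ w ∈ s, R i w z
  · exact ⟨_, i, h.insert_filter hsym (hcog i) hz ha hb hw⟩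
  push Not at hw
  -- no pair through `z` has colour `i`, and then all of them have one colour `j`
  obtain ⟨u, hu, huz⟩ := ha
  obtain ⟨v, hv, hvz⟩ := hb
  obtain ⟨j, hj⟩ := hcover z u fun e => hz (e ▸ h.subset hu)
  have hji : j ≠ i := fun e => huz (hsym _ _ _ (e ▸ hj))
  have hjv := h.rel_of_not_rel hsym hcover h2col hz hu hj hji hv hvz
  refine ⟨{z}, j, isSplit_singleton hz (h.nonempty.mono h.subset) fun y hy => ?_⟩
  by_cases hya : y ∈ a
  · exact (h.compl hsym).rel_of_not_rel hsym hcover h2col hz hv hjv hji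
      (by rwa [Finset.sdiff_sdiff_eq_self h.subset]) (hw y hy)
  · exact h.rel_of_not_rel hsym hcover h2col hz hu hj hji (mem_sdiff.mpr ⟨hy, hya⟩) (hw y hy)

lemma exists_isSplit (hsym : ∀ i x y, R i x y → R i y x)
    (hcover : ∀ x y : G, x ≠ y → ∃ i, R i x y) (hcog : ∀ i, IsCograph (relGraph (R i)))
    (h2col : AtMostTwoColors k R) (hs : 2 ≤ #s) : ∃ a i, IsSplit R s a i := by
  induction s using Finset.induction_on with
  | empty => simp at hs
  | @insert z s hz ih =>
    rw [card_insert_of_notMem hz] at hs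
    rcases (by omega : #s = 1 ∨ 2 ≤ #s) with h1 | h2
    · obtain ⟨w, rfl⟩ := card_eq_one.mp h1
      obtain ⟨i, hi⟩ := hcover z w (by simpa using hz)
      exact ⟨{z}, i, isSplit_singleton hz (singleton_nonempty w) (by simpa using hi)⟩
    · obtain ⟨a, i, h⟩ := ih h2
      exact h.exists_isSplit_insert hsym hcover hcog h2col hz

end SplitExistence

section PrefixTree

variable {α : Type} (S : Set (List α))

def prefixTree : SimpleGraph S where
  Adj u v := (∃ b, u.1 = b :: v.1) ∨ ∃ b, v.1 = b :: u.1
  symm := ⟨fun _ _ h => h.symm⟩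
  loopless := ⟨fun u h => by obtain ⟨b, h⟩ | ⟨b, h⟩ := h <;> exact List.cons_ne_self b u.1 h.symm⟩

variable {S}

lemma prefixTree_adj {u v : S} :
    (prefixTree S).Adj u v ↔ (∃ b, u.1 = b :: v.1) ∨ ∃ b, v.1 = b :: u.1 :=
  Iff.rfl

lemma mem_edges_of_suffix {c w u v : S} {b : α} (hcw : c.1 = b :: w.1)
    (p : (prefixTree S).Walk u v) (hu : c.1 <:+ u.1) (hv : ¬c.1 <:+ v.1) : s(c, w) ∈ p.edges := by
  induction p with
  | nil => exact absurd hu hv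
  | @cons u u' v hadj p ih =>
    rw [edges_cons, List.mem_cons]
    by_cases hu' : c.1 <:+ u'.1
    · exact Or.inr (ih hu' hv)
    left
    rcases prefixTree_adj.mp hadj with ⟨d, hd⟩ | ⟨d, hd⟩
    · have hcu := (List.suffix_cons_iff.mp (hd ▸ hu)).resolve_right hu'
      obtain rfl : c = u := Subtype.ext (hcu.trans hd.symm)
      obtain rfl : w = u' := Subtype.ext (List.cons.inj (hcw.symm.trans hcu)).2
      rfl
    · exact absurd (hu.trans (hd ▸ List.suffix_cons d u.1)) hu'

lemma prefixTree_isAcyclic : (prefixTree S).IsAcyclic := by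
  have hbridge : ∀ {c w : S} (b : α), c.1 = b :: w.1 → (prefixTree S).IsBridge s(c, w) :=
    fun b hcw => isBridge_iff_forall_walk_mem_edges.mpr fun p =>
      mem_edges_of_suffix hcw p List.suffix_rfl fun h => by simpa [hcw] using h.length_le
  rw [isAcyclic_iff_forall_adj_isBridge]
  intro u v huv
  rcases prefixTree_adj.mp huv with ⟨b, h⟩ | ⟨b, h⟩
  · exact hbridge b h
  · exact Sym2.eq_swap ▸ hbridge b h

namespace prefixTree

variable (hS : ∀ b w, b :: w ∈ S → w ∈ S) (hnil : [] ∈ S)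

def walkToNil : (w : List α) → (hw : w ∈ S) → (prefixTree S).Walk ⟨w, hw⟩ ⟨[], hnil⟩
  | [], _ => .nil
  | b :: w, hw => .cons (prefixTree_adj.mpr (Or.inl ⟨b, rfl⟩)) (walkToNil w (hS b w hw))

lemma mem_support_walkToNil {w : List α} (hw : w ∈ S) {u : S} :
    u ∈ (walkToNil hS hnil w hw).support ↔ u.1 <:+ w := by
  induction w with
  | nil => simp [walkToNil, Subtype.ext_iff]
  | cons b w ih => simp [walkToNil, ih, List.suffix_cons_iff, Subtype.ext_iff]

lemma isPath_walkToNil {w : List α} (hw : w ∈ S) : (walkToNil hS hnil w hw).IsPath := by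
  induction w with
  | nil => exact IsPath.nil
  | cons b w ih =>
    rw [walkToNil, cons_isPath_iff, mem_support_walkToNil]
    exact ⟨ih _, fun h => by simpa using h.length_le⟩

end prefixTree

lemma prefixTree_isTree (hS : ∀ b w, b :: w ∈ S → w ∈ S) (hnil : [] ∈ S) :
    (prefixTree S).IsTree := by
  have : Nonempty S := ⟨⟨[], hnil⟩⟩
  refine ⟨⟨fun u v => ?_⟩, prefixTree_isAcyclic⟩
  exact (prefixTree.walkToNil hS hnil u.1 u.2).reachable.trans
    (prefixTree.walkToNil hS hnil v.1 v.2).reachable.symm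

lemma anc_prefixTree_iff (hS : ∀ b w, b :: w ∈ S → w ∈ S) (hnil : [] ∈ S) {u v : S} :
    Anc (prefixTree S) ⟨[], hnil⟩ u v ↔ u.1 <:+ v.1 :=
  (anc_iff_mem_support (prefixTree_isTree hS hnil)
    (prefixTree.isPath_walkToNil hS hnil v.2)).trans (prefixTree.mem_support_walkToNil hS hnil v.2)

lemma isLeaf_prefixTree_iff (hS : ∀ b w, b :: w ∈ S → w ∈ S) (hnil : [] ∈ S) {v : S} :
    IsLeaf (prefixTree S) ⟨[], hnil⟩ v ↔ v.1 ≠ [] ∧ ∀ b, b :: v.1 ∉ S := by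
  constructor
  · rintro ⟨hv, u, -, hu⟩
    have hv : v.1 ≠ [] := fun e => hv (Subtype.ext e)
    obtain ⟨d, w, hdw⟩ := List.exists_cons_of_ne_nil hv
    refine ⟨hv, fun b hb => ?_⟩
    have hpar := hu ⟨w, hS d w (hdw ▸ v.2)⟩ (prefixTree_adj.mpr (Or.inl ⟨d, hdw⟩))
    have hchild := hu ⟨b :: v.1, hb⟩ (prefixTree_adj.mpr (Or.inr ⟨b, rfl⟩))
    have := congrArg (fun x : S => x.1.length) (hchild.trans hpar.symm)
    simp only [hdw, List.length_cons] at this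
    omega
  · rintro ⟨hv, hleaf⟩
    obtain ⟨d, w, hdw⟩ := List.exists_cons_of_ne_nil hv
    refine ⟨fun e => hv (congrArg Subtype.val e), ⟨w, hS d w (hdw ▸ v.2)⟩,
      prefixTree_adj.mpr (Or.inl ⟨d, hdw⟩), ?_⟩
    intro u hu
    rcases prefixTree_adj.mp hu with ⟨d', h⟩ | ⟨d', h⟩
    · exact Subtype.ext (List.cons.inj (h.symm.trans hdw)).2
    · exact absurd (h ▸ u.2) (hleaf d')

end PrefixTree

section SplitTree

variable {G κ : Type} [DecidableEq G] {A : Finset G → Finset G} {s : Finset G} {x : G}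

variable (A) in
def child (s : Finset G) (b : Bool) : Finset G := {x ∈ s | decide (x ∈ A s) = b}

lemma child_subset (b : Bool) : child A s b ⊆ s := filter_subset _ s

lemma mem_child_decide (hx : x ∈ s) : x ∈ child A s (decide (x ∈ A s)) := mem_filter.mpr ⟨hx, rfl⟩

lemma disjoint_child {b c : Bool} (hbc : b ≠ c) : Disjoint (child A s b) (child A s c) :=
  disjoint_filter.mpr fun _ _ hb hc => hbc (hb.symm.trans hc)

section SplitFunction

variable {R : κ → G → G → Prop} {col : Finset G → κ}
  (hA : ∀ s : Finset G, 2 ≤ #s → IsSplit R s (A s) (col s))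
include hA

lemma child_nonempty (hs : 2 ≤ #s) (b : Bool) : (child A s b).Nonempty := by
  cases b
  · obtain ⟨x, hx⟩ := (hA s hs).sdiff_nonempty
    exact ⟨x, mem_filter.mpr ⟨(mem_sdiff.mp hx).1, by simpa using (mem_sdiff.mp hx).2⟩⟩
  · obtain ⟨x, hx⟩ := (hA s hs).nonempty
    exact ⟨x, mem_filter.mpr ⟨(hA s hs).subset hx, by simpa using hx⟩⟩

lemma child_ssubset (hs : 2 ≤ #s) (b : Bool) : child A s b ⊂ s := by
  obtain ⟨x, hx⟩ := child_nonempty hA hs !b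
  exact (ssubset_iff_of_subset (child_subset b)).mpr
    ⟨x, child_subset _ hx, disjoint_right.mp (disjoint_child (Bool.not_ne_self b).symm) hx⟩

lemma rel_of_mem_child (hsym : ∀ i x y, R i x y → R i y x) (hs : 2 ≤ #s) {x y : G} {b c : Bool}
    (hx : x ∈ child A s b) (hy : y ∈ child A s c) (hbc : b ≠ c) : R (col s) x y := by
  simp only [child, mem_filter] at hx hy
  cases b <;> cases c <;> simp_all
  · exact hsym _ _ _ ((hA s hs).rel y hy.2 x (mem_sdiff.mpr hx))
  · exact (hA s hs).rel x hx.2 y (mem_sdiff.mpr hy)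

end SplitFunction

variable [Fintype G]

variable (A) in
/-- The cluster at the node reached from the root by the turns `w`, read from the right. -/
def cluster : List Bool → Finset G
  | [] => univ
  | b :: w => child A (cluster w) b

variable (A) in
def IsAddress : List Bool → Prop
  | [] => True
  | _ :: w => IsAddress w ∧ 2 ≤ #(cluster A w)

variable (A) in
abbrev addresses : Set (List Bool) := {w | IsAddress A w}

lemma cluster_anti {u v : List Bool} (h : u <:+ v) : cluster A v ⊆ cluster A u := by
  induction v with
  | nil => rw [List.suffix_nil.mp h]
  | cons b v ih =>
    rcases List.suffix_cons_iff.mp h with rfl | h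
    · exact subset_rfl
    · exact (child_subset b).trans (ih h)

lemma IsAddress.of_suffix {u v : List Bool} (hv : IsAddress A v) (h : u <:+ v) : IsAddress A u := by
  induction v with
  | nil => rwa [List.suffix_nil.mp h]
  | cons b v ih =>
    rcases List.suffix_cons_iff.mp h with rfl | h
    · exact hv
    · exact ih hv.1 h

lemma suffix_or_suffix_of_mem_cluster {u v : List Bool} (hu : x ∈ cluster A u)
    (hv : x ∈ cluster A v) : u <:+ v ∨ v <:+ u := by
  induction u with
  | nil => exact Or.inl List.nil_suffix
  | cons b u ih =>
    rcases ih (child_subset b hu) with h | h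
    · by_cases huv : u = v
      · exact Or.inr (huv ▸ List.suffix_cons b u)
      obtain ⟨c, hc⟩ := List.exists_cons_suffix h huv
      obtain rfl : b = c := by
        by_contra hbc
        exact disjoint_left.mp (disjoint_child hbc) hu (cluster_anti hc hv)
      exact Or.inl hc
    · exact Or.inr (h.trans (List.suffix_cons b u))

section SplitFunction

variable {R : κ → G → G → Prop} {col : Finset G → κ}
  (hA : ∀ s : Finset G, 2 ≤ #s → IsSplit R s (A s) (col s))
include hA

lemma IsAddress.cluster_nonempty [Nonempty G] {w : List Bool} (hw : IsAddress A w) :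
    (cluster A w).Nonempty := by
  cases w with
  | nil => exact univ_nonempty
  | cons b w => exact child_nonempty hA hw.2 b

lemma cluster_ssubset_of_suffix {u v : List Bool} (hv : IsAddress A v) (h : u <:+ v)
    (hne : u ≠ v) : cluster A v ⊂ cluster A u := by
  obtain ⟨b, hb⟩ := List.exists_cons_suffix h hne
  exact (cluster_anti hb).trans_ssubset (child_ssubset hA (hv.of_suffix hb).2 b)

lemma suffix_of_mem_cluster {u v : List Bool} (hu : IsAddress A u) (hv : cluster A v = {x})
    (hx : x ∈ cluster A u) : u <:+ v := by
  rcases suffix_or_suffix_of_mem_cluster hx (hv ▸ mem_singleton_self x) with h | h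
  · exact h
  by_cases e : v = u
  · exact e ▸ List.suffix_rfl
  have hsub := cluster_ssubset_of_suffix hA hu h e
  rw [hv, ssubset_singleton_iff] at hsub
  exact absurd (hsub ▸ hx) (notMem_empty x)

lemma eq_of_cluster_eq_singleton {u v : List Bool} (hu : IsAddress A u) (hv : IsAddress A v)
    (hux : cluster A u = {x}) (hvx : cluster A v = {x}) : u = v :=
  (suffix_of_mem_cluster hA hu hvx (hux ▸ mem_singleton_self x)).eq_of_length
    (le_antisymm (suffix_of_mem_cluster hA hu hvx (hux ▸ mem_singleton_self x)).length_le
      (suffix_of_mem_cluster hA hv hux (hvx ▸ mem_singleton_self x)).length_le)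

lemma exists_isAddress_cluster_eq_singleton {w : List Bool} (hw : IsAddress A w)
    (hx : x ∈ cluster A w) : ∃ v, IsAddress A v ∧ cluster A v = {x} := by
  by_cases hs : 2 ≤ #(cluster A w)
  · have := card_lt_card (child_ssubset hA hs (decide (x ∈ A (cluster A w))))
    exact exists_isAddress_cluster_eq_singleton (w := _ :: w) ⟨hw, hs⟩ (mem_child_decide hx)
  · exact ⟨w, hw, eq_singleton_iff_unique_mem.mpr
      ⟨hx, fun y hy => card_le_one.mp (by omega) y hy x hx⟩⟩
termination_by #(cluster A w)

end SplitFunction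

end SplitTree

section Construction

variable {G : Type} [Fintype G] [DecidableEq G] {k : ℕ} {R : Fin k → G → G → Prop}
  {A : Finset G → Finset G} {col : Finset G → Fin k}

lemma rel_of_isLCA (hsym : ∀ i x y, R i x y → R i y x)
    (hA : ∀ s : Finset G, 2 ≤ #s → IsSplit R s (A s) (col s)) {x y : G} (hxy : x ≠ y)
    {u v w : addresses A} (hu : cluster A u.1 = {x}) (hv : cluster A v.1 = {y})
    (hw : IsLCA (prefixTree (addresses A)) ⟨[], trivial⟩ w u v) : R (col (cluster A w.1)) x y := by
  have hanc := fun {a b : addresses A} =>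
    anc_prefixTree_iff (S := addresses A) (u := a) (v := b) (fun _ _ h => h.1) trivial
  obtain ⟨hwu, hwv, hmin⟩ := hw
  rw [hanc] at hwu hwv
  have hx := cluster_anti hwu (hu ▸ mem_singleton_self x)
  have hy := cluster_anti hwv (hv ▸ mem_singleton_self y)
  have hs : 2 ≤ #(cluster A w.1) := one_lt_card.mpr ⟨x, hx, y, hy, hxy⟩
  refine rel_of_mem_child hA hsym hs (mem_child_decide hx) (mem_child_decide hy) fun hb => ?_
  -- otherwise the child of `w` containing both `x` and `y` is a lower common ancestor
  let c : addresses A := ⟨decide (x ∈ A (cluster A w.1)) :: w.1, w.2, hs⟩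
  have hcx : x ∈ cluster A c.1 := mem_child_decide hx
  have hcy : y ∈ cluster A c.1 := show y ∈ child A _ _ from hb ▸ mem_child_decide hy
  have hcw := hanc.mp (hmin c (hanc.mpr (suffix_of_mem_cluster hA c.2 hu hcx))
    (hanc.mpr (suffix_of_mem_cluster hA c.2 hv hcy)))
  simpa [c] using hcw.length_le

lemma hasEventTree_of_forall_isSplit (hG : 2 ≤ Fintype.card G)
    (hsym : ∀ i x y, R i x y → R i y x) (hdisj : ∀ i j x y, R i x y → R j x y → i = j)
    (hA : ∀ s : Finset G, 2 ≤ #s → IsSplit R s (A s) (col s)) : HasEventTree G k R := by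
  have hS : ∀ b w, b :: w ∈ addresses A → w ∈ addresses A := fun _ _ h => h.1
  have hnil : [] ∈ addresses A := trivial
  choose addr haddr hcl using fun x : G =>
    exists_isAddress_cluster_eq_singleton hA (w := []) trivial (mem_univ x)
  let ι : G → addresses A := fun x => ⟨addr x, haddr x⟩
  refine ⟨addresses A, prefixTree (addresses A), ⟨[], hnil⟩, ι, fun w => col (cluster A w.1),
    prefixTree_isTree hS hnil, fun x y hxy => ?_, fun v => ?_, ?_⟩
  · exact singleton_injective ((hcl x).symm.trans ((congrArg (cluster A ∘ Subtype.val) hxy).trans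
      (hcl y)))
  · have : Nonempty G := Fintype.card_pos_iff.mp (by omega)
    rw [isLeaf_prefixTree_iff hS hnil]
    constructor
    · rintro ⟨-, hleaf⟩
      have h1 : #(cluster A v.1) = 1 := by
        have hpos := (IsAddress.cluster_nonempty hA v.2).card_pos
        have hlt : ¬2 ≤ #(cluster A v.1) := fun h => hleaf true ⟨v.2, h⟩
        omega
      obtain ⟨g, hg⟩ := card_eq_one.mp h1
      exact ⟨g, Subtype.ext (eq_of_cluster_eq_singleton hA (haddr g) v.2 (hcl g) hg)⟩
    · rintro ⟨g, rfl⟩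
      refine ⟨fun e => ?_, fun b hb => ?_⟩
      · have := congrArg Finset.card ((congrArg (cluster A) e).symm.trans (hcl g))
        simp [cluster] at this
        omega
      · simpa [ι, hcl g] using hb.2
  · intro x y hxy w hw i
    have hrel := rel_of_isLCA hsym hA hxy (hcl x) (hcl y) hw
    exact ⟨fun h => h ▸ hrel, hdisj _ _ _ _ hrel⟩

end Construction

lemma hasEventTree_of_isCograph {G : Type} [Fintype G] {k : ℕ} {R : Fin k → G → G → Prop}
    (hG : 2 ≤ Fintype.card G) (hsym : ∀ i x y, R i x y → R i y x)
    (hdisj : ∀ i j x y, R i x y → R j x y → i = j) (hcover : ∀ x y : G, x ≠ y → ∃ i, R i x y)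
    (hcog : ∀ i, IsCograph (relGraph (R i))) (h2col : AtMostTwoColors k R) :
    HasEventTree G k R := by
  classical
  obtain ⟨x, y, hxy⟩ := Fintype.exists_pair_of_one_lt_card hG
  have : Nonempty (Fin k) := ⟨(hcover x y hxy).choose⟩
  have hsplit (s : Finset G) : ∃ a i, 2 ≤ #s → IsSplit R s a i := by
    by_cases hs : 2 ≤ #s
    · obtain ⟨a, i, h⟩ := exists_isSplit hsym hcover hcog h2col hs
      exact ⟨a, i, fun _ => h⟩
    · exact ⟨∅, Classical.arbitrary _, fun h => absurd h hs⟩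
  choose A col hA using hsplit
  exact hasEventTree_of_forall_isSplit hG hsym hdisj hA

theorem stmt0_general (G : Type) [Fintype G] (hG : 3 ≤ Fintype.card G)
    (k : ℕ) (R : Fin k → G → G → Prop)
    (hsym : ∀ i x y, R i x y → R i y x)
    (hdisj : ∀ i j x y, R i x y → R j x y → i = j)
    (hcover : ∀ x y : G, x ≠ y → ∃ i, R i x y) :
    HasEventTree G k R ↔
      ((∀ i, IsCograph (relGraph (R i))) ∧ AtMostTwoColors k R) :=
  ⟨fun ⟨_, _, _, _, _, hT, _, _, hrep⟩ =>
    ⟨isCograph_of_representsRel hT hsym hrep, atMostTwoColors_of_representsRel hT hrep⟩,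
   fun ⟨hcog, h2col⟩ => hasEventTree_of_isCograph (by omega) hsym hdisj hcover hcog h2col⟩

/-- There is an event-labeled tree representing the pairwise disjoint
irreflexive symmetric relations `R 0, …, R (k-1)` (whose union is all pairs of distinct
elements of `G`, `|G| ≥ 3`) iff (i) each graph `G_{R i}` is a cograph and (ii) any three
pairwise distinct elements have their three pairs in at most two distinct relations. -/
theorem stmt0 (G : Type) [Fintype G] (hG : 3 ≤ Fintype.card G)
    (k : ℕ) (R : Fin k → G → G → Prop)
    (hirr : ∀ i x, ¬ R i x x)
    (hsym : ∀ i x y, R i x y → R i y x)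
    (hdisj : ∀ i j x y, R i x y → R j x y → i = j)
    (hcover : ∀ x y : G, x ≠ y → ∃ i, R i x y) :
    HasEventTree G k R ↔
      ((∀ i, IsCograph (relGraph (R i))) ∧ AtMostTwoColors k R) :=
  stmt0_general G hG k R hsym hdisj hcover
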